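/- arXiv:0709.0764 — 2 statements merged into one kernel-verified Lean document; each statement's English description precedes it below -/
import Mathlib

section
/- For every positive integer n and natural number m, Γ(n+1)/Γ(n(m+1)+1) = n^{-nm} · ∏_{k=0}^{n-1} Γ(1 + (k+1)/n) / Γ(m + 1 + (k+1)/n). -/
open Real Finset

/-! Both sides are reciprocals of rising products, since `Γ x / Γ (x + p) = (x (x+1) ⋯ (x+p-1))⁻¹`.
Sorting the `nm` factors `n+1, …, n(m+1)` on the left by their residue mod `n` writes them as
`n (1 + (k+1)/n + j)`, the factors on the right: this is the Pochhammer form of Gauss's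
multiplication formula, `(x)_{nm} = n^{nm} ∏_{k<n} ((x+k)/n)_m`. -/

theorem Real.Gamma_add_nat_eq_mul_prod {x : ℝ} (hx : ∀ k : ℕ, x ≠ -k) (p : ℕ) :
    Gamma (x + p) = Gamma x * ∏ k ∈ range p, (x + k) := by
  induction p with
  | zero => simp
  | succ p ih =>
    have hxp : x + p ≠ 0 := fun h => hx p (by linarith)
    rw [Nat.cast_succ, ← add_assoc, Gamma_add_one hxp, ih, prod_range_succ]
    ring

theorem Real.Gamma_div_Gamma_add_nat {x : ℝ} (hx : 0 < x) (p : ℕ) :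
    Gamma x / Gamma (x + p) = (∏ k ∈ range p, (x + k))⁻¹ := by
  have hx' : ∀ k : ℕ, x ≠ -k := fun k h => by
    have : (0 : ℝ) ≤ k := k.cast_nonneg
    linarith
  rw [Gamma_add_nat_eq_mul_prod hx', div_mul_cancel_left₀ (Gamma_pos_of_pos hx).ne']

theorem Finset.prod_range_mul_eq_prod_prod {M : Type*} [CommMonoid M] (f : ℕ → M) (n m : ℕ) :
    ∏ i ∈ range (n * m), f i = ∏ j ∈ range m, ∏ k ∈ range n, f (n * j + k) := by
  induction m with
  | zero => simp
  | succ m ih => rw [Nat.mul_succ, prod_range_add, ih, prod_range_succ]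

theorem prod_range_mul_add_eq_pow_mul_prod {K : Type*} [Field K] {n : ℕ} (hn : (n : K) ≠ 0)
    (x : K) (m : ℕ) :
    ∏ i ∈ range (n * m), (x + i) =
      (n : K) ^ (n * m) * ∏ k ∈ range n, ∏ j ∈ range m, ((x + k) / n + j) := by
  have hfactor : ∀ j k : ℕ, x + ((n * j + k : ℕ) : K) = n * ((x + k) / n + j) := fun j k => by
    push_cast
    field_simp
    ring
  rw [prod_range_mul_eq_prod_prod (fun i : ℕ => x + (i : K))]
  simp only [hfactor, prod_mul_distrib, prod_const, card_range]
  rw [prod_comm, ← pow_mul]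

/-- `Γ(n+1)/Γ(n(m+1)+1) = n^{-nm} ∏_{k=0}^{n-1} Γ(1 + (k+1)/n) / Γ(m + 1 + (k+1)/n)`
for every positive integer `n` and natural number `m`. -/
theorem gamma_ratio_product (n : ℕ) (hn : 0 < n) (m : ℕ) :
    Gamma ((n : ℝ) + 1) / Gamma ((n : ℝ) * (m + 1) + 1)
      = ((n : ℝ) ^ (n * m))⁻¹ *
        ∏ k ∈ range n, Gamma (1 + ((k : ℝ) + 1) / n) / Gamma ((m : ℝ) + 1 + ((k : ℝ) + 1) / n) := by
  have hn' : (n : ℝ) ≠ 0 := Nat.cast_ne_zero.mpr hn.ne'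
  have hlhs : Gamma ((n : ℝ) + 1) / Gamma ((n : ℝ) * (m + 1) + 1) =
      (∏ i ∈ range (n * m), ((n : ℝ) + 1 + i))⁻¹ := by
    rw [← Gamma_div_Gamma_add_nat (by positivity), Nat.cast_mul]
    ring_nf
  have hrhs (k : ℕ) : Gamma (1 + ((k : ℝ) + 1) / n) / Gamma ((m : ℝ) + 1 + ((k : ℝ) + 1) / n) =
      (∏ j ∈ range m, (((n : ℝ) + 1 + k) / n + j))⁻¹ := by
    have hshift : ((n : ℝ) + 1 + k) / n = 1 + ((k : ℝ) + 1) / n := by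
      field_simp
      ring
    rw [hshift, add_comm (m : ℝ) 1, add_right_comm, Gamma_div_Gamma_add_nat (by positivity)]
  simp only [hlhs, hrhs, prod_range_mul_add_eq_pow_mul_prod hn', mul_inv, prod_inv_distrib]
end

section
/- Let f(t) = pα e^{-αt} + qβ e^{-βt} with 0 < p < 1, q = 1−p, and β > α > 0. Then for every m ≥ 1 and t > 0, the m-fold convolution satisfies f^{*m}(t) = ∑_{j=0}^∞ γ_{m,j} · e(m+j, β; t), where e(k, β; t) = β^k t^{k-1} e^{-βt}/Γ(k) is the Erlang(k, β) density and γ_{m,j} = q^m (1 − α/β)^j ∑_{r=0}^m C(m,r) ((r)_j/j!) (αp/(βq))^r. -/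
open Real

/-- Convolution of two functions on `(0, ∞)`: `(g * h)(t) = ∫_0^t g(t-v) h(v) dv`. -/
noncomputable def conv (g h : ℝ → ℝ) : ℝ → ℝ := fun t => ∫ v in (0:ℝ)..t, g (t - v) * h v

/-- `cpm f g m = f^{*m} * g`, the `m`-fold self-convolution of `f` convolved with `g`
(with `f^{*0} * g = g`).  In particular `cpm f f m = f^{*(m+1)}`. -/
noncomputable def cpm (f g : ℝ → ℝ) : ℕ → ℝ → ℝ
  | 0 => g
  | m + 1 => conv f (cpm f g m)

open Finset

/-- Pochhammer symbol `(a)_j = a (a+1) ⋯ (a+j-1)`. -/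
noncomputable def poch (a : ℝ) (j : ℕ) : ℝ := ∏ k ∈ range j, (a + k)

/-- Erlang(k, β) density `e(k, β; t) = β^k t^{k-1} e^{-βt} / Γ(k)`. -/
noncomputable def erl (k : ℕ) (β t : ℝ) : ℝ := β ^ k * t ^ (k - 1 : ℤ) * exp (-β * t) / Gamma k

/-! With `x = 1 - α/β`, the identity `∑ⱼ xʲ e(1+j, β; s) = β e^{-αs}` exhibits the mixed
exponential density itself as an Erlang mixture: `f = ∑ⱼ dⱼ e(1+j, β; ·)` with `d₀ = q + pα/β` and
`dⱼ = (pα/β) xʲ`. Erlang densities of a common rate convolve by adding their shapes (a Beta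
integral), so convolving two Erlang mixtures multiplies the generating functions of their weights.
Hence `f^{*m}` is the Erlang mixture whose weights are the coefficients of `D(z)^m`, where
`D(z) = q (1 + y/(1 - xz))` and `y = αp/(βq)`; expanding `D^m` by the binomial theorem and
`(1 - xz)^{-r} = ∑ⱼ ((r)ⱼ/j!) xʲ zʲ` gives `γ_{m,j}`. -/

open PowerSeries

lemma poch_zero (a : ℝ) : poch a 0 = 1 := prod_range_zero _

lemma poch_succ (a : ℝ) (j : ℕ) : poch a (j + 1) = poch a j * (a + j) := prod_range_succ _ _

lemma poch_succ' (a : ℝ) (j : ℕ) : poch a (j + 1) = a * poch (a + 1) j := by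
  rw [poch, prod_range_succ', poch, mul_comm]
  simp only [Nat.cast_zero, add_zero, Nat.cast_succ, add_assoc, add_comm (1 : ℝ)]

lemma poch_zero_left (j : ℕ) : poch 0 j = if j = 0 then 1 else 0 := by
  cases j with
  | zero => exact poch_zero 0
  | succ j => rw [poch_succ', zero_mul, if_neg j.succ_ne_zero]

lemma sum_range_poch_div_factorial (a : ℝ) (n : ℕ) :
    ∑ j ∈ range (n + 1), poch a j / j.factorial = poch (a + 1) n / n.factorial := by
  induction n with
  | zero => simp [poch_zero]
  | succ n ih =>
    rw [sum_range_succ, ih, poch_succ' a, poch_succ (a + 1), Nat.factorial_succ]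
    push_cast
    field_simp
    ring

lemma mk_pow_pow (x : ℝ) (r : ℕ) :
    mk (fun j => x ^ j) ^ r = mk fun j => poch r j / j.factorial * x ^ j := by
  induction r with
  | zero =>
    ext j
    rw [pow_zero, coeff_one, coeff_mk, Nat.cast_zero, poch_zero_left]
    split_ifs with hj
    · simp [hj]
    · simp
  | succ r ih =>
    ext n
    rw [pow_succ, ih, coeff_mul, Nat.sum_antidiagonal_eq_sum_range_succ_mk, coeff_mk]
    simp only [coeff_mk]
    calc ∑ k ∈ range (n + 1), poch r k / k.factorial * x ^ k * x ^ (n - k)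
        = (∑ k ∈ range (n + 1), poch r k / k.factorial) * x ^ n := by
          rw [sum_mul]
          refine sum_congr rfl fun k hk => ?_
          rw [mul_assoc, ← pow_add, Nat.add_sub_cancel' (Nat.lt_succ_iff.mp (mem_range.mp hk))]
      _ = _ := by rw [sum_range_poch_div_factorial]; push_cast; rfl

noncomputable def mixedExpSeries (q x y : ℝ) : ℝ⟦X⟧ := C q * (1 + C y * mk fun i => x ^ i)

lemma coeff_mixedExpSeries (q x y : ℝ) (j : ℕ) :
    coeff j (mixedExpSeries q x y) = q * ((if j = 0 then 1 else 0) + y * x ^ j) := by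
  simp [mixedExpSeries, coeff_one]

lemma summable_coeff_mixedExpSeries (q y : ℝ) {x : ℝ} (hx : |x| < 1) :
    Summable fun j => coeff j (mixedExpSeries q x y) := by
  simp_rw [coeff_mixedExpSeries]
  exact ((hasSum_ite_eq 0 (1 : ℝ)).summable.add
    ((summable_geometric_of_abs_lt_one hx).mul_left y)).mul_left q

lemma coeff_mixedExpSeries_pow (q x y : ℝ) (m j : ℕ) :
    coeff j (mixedExpSeries q x y ^ m)
      = q ^ m * x ^ j *
          ∑ r ∈ range (m + 1), (m.choose r : ℝ) * (poch r j / j.factorial) * y ^ r := by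
  rw [mixedExpSeries, mul_pow, ← map_pow, coeff_C_mul, add_comm, add_pow, map_sum, mul_sum,
    mul_sum]
  refine sum_congr rfl fun r _ => ?_
  rw [one_pow, mul_one, mul_pow, ← map_pow, mk_pow_pow, ← map_natCast (C (R := ℝ)), coeff_mul_C,
    coeff_C_mul, coeff_mk]
  ring

lemma summable_coeff_mul {φ ψ : ℝ⟦X⟧} (hφ : Summable fun n => coeff n φ)
    (hψ : Summable fun n => coeff n ψ) : Summable fun n => coeff n (φ * ψ) := by
  simp_rw [coeff_mul]
  exact (summable_norm_sum_mul_antidiagonal_of_summable_norm hφ.norm hψ.norm).of_norm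

lemma summable_coeff_pow {φ : ℝ⟦X⟧} (hφ : Summable fun n => coeff n φ) (m : ℕ) :
    Summable fun n => coeff n (φ ^ m) := by
  induction m with
  | zero => simpa [coeff_one] using (hasSum_ite_eq 0 (1 : ℝ)).summable
  | succ m ih => rw [pow_succ]; exact summable_coeff_mul ih hφ

theorem HasSum.sum_antidiagonal {A α : Type*} [AddCommMonoid A] [HasAntidiagonal A]
    [AddCommMonoid α] [TopologicalSpace α] [ContinuousAdd α] [RegularSpace α]
    {f : A × A → α} {s : α} (h : HasSum f s) :
    HasSum (fun n => ∑ ij ∈ antidiagonal n, f ij) s :=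
  (HasAntidiagonal.sigmaAntidiagonalEquivProd.hasSum_iff.mpr h).sigma fun n =>
    (antidiagonal n).hasSum f

lemma erl_succ (k : ℕ) (β t : ℝ) :
    erl (k + 1) β t = β ^ (k + 1) * t ^ k * exp (-β * t) / k.factorial := by
  simp only [erl, Nat.cast_succ, Gamma_nat_eq_factorial, add_sub_cancel_right, zpow_natCast]

lemma continuous_erl {k : ℕ} (hk : k ≠ 0) (β : ℝ) : Continuous (erl k β) := by
  obtain ⟨k, rfl⟩ := Nat.exists_eq_add_one_of_ne_zero hk
  simp_rw [funext (erl_succ k β)]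
  fun_prop

lemma norm_erl_le {k : ℕ} (hk : k ≠ 0) {β t : ℝ} (hβ : 0 < β) (ht : 0 ≤ t) :
    ‖erl k β t‖ ≤ β := by
  obtain ⟨k, rfl⟩ := Nat.exists_eq_add_one_of_ne_zero hk
  have hpow : (β * t) ^ k / k.factorial ≤ exp (β * t) :=
    pow_div_factorial_le_exp _ (by positivity) k
  rw [Real.norm_of_nonneg (by rw [erl_succ]; positivity), erl_succ]
  calc β ^ (k + 1) * t ^ k * exp (-β * t) / k.factorial
      = β * ((β * t) ^ k / k.factorial) * exp (-(β * t)) := by rw [mul_pow, neg_mul]; ring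
    _ ≤ β * exp (β * t) * exp (-(β * t)) := by gcongr
    _ = β := by rw [mul_assoc, ← exp_add, add_neg_cancel, exp_zero, mul_one]

lemma norm_mul_erl_le (c : ℝ) {k : ℕ} (hk : k ≠ 0) {β t : ℝ} (hβ : 0 < β) (ht : 0 ≤ t) :
    ‖c * erl k β t‖ ≤ ‖c‖ * β := by
  rw [norm_mul]
  exact mul_le_mul_of_nonneg_left (norm_erl_le hk hβ ht) (norm_nonneg c)

lemma integral_sub_pow_mul_pow_succ (a b : ℕ) (t : ℝ) :
    ∫ v in (0 : ℝ)..t, (t - v) ^ a * v ^ (b + 1)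
      = (b + 1) / (a + 1) * ∫ v in (0 : ℝ)..t, (t - v) ^ (a + 1) * v ^ b := by
  have hw : ∀ v, HasDerivAt (fun v => -(t - v) ^ (a + 1) / (a + 1)) ((t - v) ^ a) v := by
    intro v
    refine ((((hasDerivAt_id' v).const_sub t).fun_pow (a + 1)).fun_neg.div_const
      ((a : ℝ) + 1)).congr_deriv ?_
    field_simp
    simp
  have hu : ∀ v, HasDerivAt (fun v : ℝ => v ^ (b + 1)) ((b + 1) * v ^ b) v := fun v => by
    simpa using hasDerivAt_pow (b + 1) v
  have hparts := intervalIntegral.integral_mul_deriv_eq_deriv_mul (a := 0) (b := t)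
    (fun v _ => hu v) (fun v _ => hw v)
    ((continuous_const.mul (continuous_pow b)).intervalIntegrable _ _)
    (((continuous_const.sub continuous_id).pow a).intervalIntegrable _ _)
  simp_rw [mul_comm ((t - _) ^ a)]
  simp only [hparts, sub_self, zero_pow (Nat.add_one_ne_zero _), neg_zero, zero_div, mul_zero,
    zero_mul, sub_zero, zero_sub, ← intervalIntegral.integral_neg]
  rw [← intervalIntegral.integral_const_mul]
  congr 1 with v
  ring

lemma integral_sub_pow_mul_pow (a b : ℕ) (t : ℝ) :
    ∫ v in (0 : ℝ)..t, (t - v) ^ a * v ^ b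
      = a.factorial * b.factorial / (a + b + 1).factorial * t ^ (a + b + 1) := by
  induction b generalizing a with
  | zero =>
    simp only [pow_zero, mul_one, add_zero, Nat.factorial_zero, Nat.cast_one,
      intervalIntegral.integral_comp_sub_left (· ^ a), sub_self, sub_zero, integral_pow]
    rw [Nat.factorial_succ]
    push_cast
    field_simp
    simp
  | succ b ih =>
    rw [integral_sub_pow_mul_pow_succ, ih, show a + 1 + b + 1 = a + (b + 1) + 1 by ring,
      Nat.factorial_succ a, Nat.factorial_succ b]
    push_cast
    field_simp

lemma conv_erl {k l : ℕ} (hk : k ≠ 0) (hl : l ≠ 0) (β : ℝ) :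
    conv (erl k β) (erl l β) = erl (k + l) β := by
  obtain ⟨a, rfl⟩ := Nat.exists_eq_add_one_of_ne_zero hk
  obtain ⟨b, rfl⟩ := Nat.exists_eq_add_one_of_ne_zero hl
  ext t
  have hfactor : ∀ v, erl (a + 1) β (t - v) * erl (b + 1) β v
      = β ^ (a + b + 2) * exp (-β * t) / (a.factorial * b.factorial) * ((t - v) ^ a * v ^ b) := by
    intro v
    rw [erl_succ, erl_succ, show -β * t = -β * (t - v) + -β * v by ring, exp_add]
    field_simp
    ring
  rw [conv, intervalIntegral.integral_congr fun v _ => hfactor v,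
    intervalIntegral.integral_const_mul, integral_sub_pow_mul_pow,
    show a + 1 + (b + 1) = a + b + 1 + 1 by ring, erl_succ]
  field_simp

lemma hasSum_pow_mul_erl (x β s : ℝ) :
    HasSum (fun j => x ^ j * erl (1 + j) β s) (β * exp ((x - 1) * β * s)) := by
  have hexp := (NormedSpace.expSeries_div_hasSum_exp (x * β * s)).mul_left (β * exp (-β * s))
  rw [← Real.exp_eq_exp_ℝ, mul_assoc β (exp (-β * s)) (exp _), ← exp_add] at hexp
  rw [show (x - 1) * β * s = -β * s + x * β * s by ring]
  refine hexp.congr_fun fun j => ?_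
  rw [add_comm, erl_succ]
  ring

/-- The weights are stored as power-series coefficients so that convolving two mixtures
multiplies them. -/
noncomputable def erlangMixture (β : ℝ) (k : ℕ) (φ : ℝ⟦X⟧) (t : ℝ) : ℝ :=
  ∑' j, coeff j φ * erl (k + j) β t

lemma summable_norm_coeff_mul_erl {β : ℝ} (hβ : 0 < β) {k : ℕ} (hk : k ≠ 0) {φ : ℝ⟦X⟧}
    (hφ : Summable fun n => coeff n φ) {t : ℝ} (ht : 0 ≤ t) :
    Summable fun j => ‖coeff j φ * erl (k + j) β t‖ :=
  .of_nonneg_of_le (fun _ => norm_nonneg _) (fun j => norm_mul_erl_le _ (by omega) hβ ht)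
    (hφ.norm.mul_right β)

lemma erlangMixture_mixedExpSeries (q x y β s : ℝ) :
    erlangMixture β 1 (mixedExpSeries q x y) s
      = q * β * (exp (-β * s) + y * exp ((x - 1) * β * s)) := by
  have h := ((hasSum_ite_eq 0 (erl 1 β s)).add ((hasSum_pow_mul_erl x β s).mul_left y)).mul_left q
  refine (h.congr_fun fun j => ?_).tsum_eq.trans ?_
  · rw [coeff_mixedExpSeries]
    split_ifs with hj
    · subst hj; ring
    · ring
  · rw [show erl 1 β s = β * exp (-β * s) by simpa using erl_succ 0 β s]
    ring

lemma hasSum_conv_erlangMixture {β : ℝ} (hβ : 0 < β) {k l : ℕ} (hk : k ≠ 0) (hl : l ≠ 0)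
    {φ ψ : ℝ⟦X⟧} (hφ : Summable fun n => coeff n φ) (hψ : Summable fun n => coeff n ψ)
    {t : ℝ} (ht : 0 ≤ t) :
    HasSum (fun ij : ℕ × ℕ => coeff ij.1 φ * coeff ij.2 ψ * erl (k + l + (ij.1 + ij.2)) β t)
      (conv (erlangMixture β k φ) (erlangMixture β l ψ) t) := by
  set F : ℕ × ℕ → ℝ → ℝ := fun ij v =>
    coeff ij.1 φ * erl (k + ij.1) β (t - v) * (coeff ij.2 ψ * erl (l + ij.2) β v)
  have hlim : ∀ v ∈ Set.uIoc 0 t,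
      HasSum (fun ij => F ij v) (erlangMixture β k φ (t - v) * erlangMixture β l ψ v) := by
    intro v hv
    rw [Set.uIoc_of_le ht] at hv
    have hsφ := summable_norm_coeff_mul_erl hβ hk hφ (sub_nonneg.mpr hv.2)
    have hsψ := summable_norm_coeff_mul_erl hβ hl hψ hv.1.le
    have hprod := summable_mul_of_summable_norm hsφ hsψ
    exact hsφ.of_norm.hasSum.mul hsψ.of_norm.hasSum hprod
  have hterm : ∀ ij : ℕ × ℕ, ∫ v in (0 : ℝ)..t, F ij v
      = coeff ij.1 φ * coeff ij.2 ψ * erl (k + l + (ij.1 + ij.2)) β t := by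
    intro ij
    simp only [F, mul_mul_mul_comm _ (erl _ β _), intervalIntegral.integral_const_mul]
    change _ * conv (erl _ β) (erl _ β) t = _
    rw [conv_erl (by omega) (by omega), add_add_add_comm]
  refine HasSum.congr_fun ?_ fun ij => (hterm ij).symm
  refine intervalIntegral.hasSum_integral_of_dominated_convergence
    (fun ij _ => ‖coeff ij.1 φ‖ * β * (‖coeff ij.2 ψ‖ * β)) (fun ij => ?_) (fun ij => ?_)
    (.of_forall fun _ _ => (hφ.norm.mul_right β).mul_of_nonneg (hψ.norm.mul_right β)
      (fun _ => by positivity) (fun _ => by positivity))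
    intervalIntegrable_const (.of_forall hlim)
  · exact ((continuous_const.mul ((continuous_erl (by omega) β).comp
      (continuous_const.sub continuous_id))).mul
      (continuous_const.mul (continuous_erl (by omega) β))).aestronglyMeasurable
  · refine .of_forall fun v hv => ?_
    rw [Set.uIoc_of_le ht] at hv
    rw [norm_mul]
    exact mul_le_mul (norm_mul_erl_le _ (by omega) hβ (sub_nonneg.mpr hv.2))
      (norm_mul_erl_le _ (by omega) hβ hv.1.le) (norm_nonneg _) (by positivity)

lemma conv_erlangMixture {β : ℝ} (hβ : 0 < β) {k l : ℕ} (hk : k ≠ 0) (hl : l ≠ 0)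
    {φ ψ : ℝ⟦X⟧} (hφ : Summable fun n => coeff n φ) (hψ : Summable fun n => coeff n ψ)
    {t : ℝ} (ht : 0 ≤ t) :
    conv (erlangMixture β k φ) (erlangMixture β l ψ) t = erlangMixture β (k + l) (φ * ψ) t := by
  refine ((hasSum_conv_erlangMixture hβ hk hl hφ hψ ht).sum_antidiagonal.congr_fun
    fun n => ?_).tsum_eq.symm
  rw [coeff_mul, sum_mul]
  exact sum_congr rfl fun ij hij => by rw [mem_antidiagonal.mp hij]

lemma cpm_erlangMixture {β : ℝ} (hβ : 0 < β) {φ : ℝ⟦X⟧} (hφ : Summable fun n => coeff n φ)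
    (n : ℕ) {t : ℝ} (ht : 0 ≤ t) :
    cpm (erlangMixture β 1 φ) (erlangMixture β 1 φ) n t
      = erlangMixture β (n + 1) (φ ^ (n + 1)) t := by
  induction n generalizing t with
  | zero => rw [zero_add, pow_one]; rfl
  | succ n ih =>
    calc conv (erlangMixture β 1 φ) (cpm (erlangMixture β 1 φ) (erlangMixture β 1 φ) n) t
        = conv (erlangMixture β 1 φ) (erlangMixture β (n + 1) (φ ^ (n + 1))) t :=
          intervalIntegral.integral_congr fun v hv => by
            rw [Set.uIcc_of_le ht] at hv
            simp only [ih hv.1]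
      _ = erlangMixture β (n + 1 + 1) (φ ^ (n + 1 + 1)) t := by
          rw [conv_erlangMixture hβ one_ne_zero n.succ_ne_zero hφ (summable_coeff_pow hφ _) ht,
            ← pow_succ', add_comm 1]

theorem mixed_exponential_convolution_general (p q α β : ℝ) (hp1 : p < 1)
    (hq : q = 1 - p) (hα : 0 < α) (hαβ : α < β)
    (f : ℝ → ℝ) (hf : f = fun t => p * α * exp (-α * t) + q * β * exp (-β * t)) :
    ∀ (m : ℕ), 1 ≤ m → ∀ t : ℝ, 0 < t →
      cpm f f (m - 1) t
        = ∑' j : ℕ,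
            (q ^ m * (1 - α / β) ^ j *
              ∑ r ∈ range (m + 1), (m.choose r : ℝ) * (poch r j / j.factorial) * (α * p / (β * q)) ^ r)
            * erl (m + j) β t := by
  intro m hm t ht
  obtain ⟨n, rfl⟩ := Nat.exists_eq_add_of_le' hm
  have hβ : 0 < β := hα.trans hαβ
  have hq0 : q ≠ 0 := by rw [hq]; linarith
  have hx : |1 - α / β| < 1 := by
    have h0 : 0 < α / β := div_pos hα hβ
    have h1 : α / β < 1 := (div_lt_one hβ).mpr hαβ
    rw [abs_lt]
    constructor <;> linarith
  have hf' : f = erlangMixture β 1 (mixedExpSeries q (1 - α / β) (α * p / (β * q))) := by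
    ext s
    rw [hf, erlangMixture_mixedExpSeries]
    field_simp
    ring_nf
  rw [hf', Nat.add_sub_cancel, cpm_erlangMixture hβ (summable_coeff_mixedExpSeries _ _ hx) n ht.le]
  simp_rw [erlangMixture, coeff_mixedExpSeries_pow]

/-- The `m`-fold convolution of the mixed exponential density
`f(t) = pα e^{-αt} + qβ e^{-βt}` is an infinite Erlang mixture:
`f^{*m}(t) = ∑_{j=0}^∞ γ_{m,j} e(m+j, β; t)` with
`γ_{m,j} = q^m (1-α/β)^j ∑_{r=0}^m C(m,r) ((r)_j/j!) (αp/(βq))^r`. -/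
theorem mixed_exponential_convolution (p q α β : ℝ) (hp : 0 < p) (hp1 : p < 1)
    (hq : q = 1 - p) (hα : 0 < α) (hαβ : α < β)
    (f : ℝ → ℝ) (hf : f = fun t => p * α * exp (-α * t) + q * β * exp (-β * t)) :
    ∀ (m : ℕ), 1 ≤ m → ∀ t : ℝ, 0 < t →
      cpm f f (m - 1) t
        = ∑' j : ℕ,
            (q ^ m * (1 - α / β) ^ j *
              ∑ r ∈ range (m + 1), (m.choose r : ℝ) * (poch r j / j.factorial) * (α * p / (β * q)) ^ r)
            * erl (m + j) β t :=
  mixed_exponential_convolution_general p q α β hp1 hq hα hαβ f hf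
end
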